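/- arXiv:math-ph/9805024 — 5 statements merged into one kernel-verified Lean document; each statement's English description precedes it below -/
import Mathlib

section
/- Given a holonomic connection ξ with components ξ^i(t, q^j, q^j_t), the associated dynamic connection γ_ξ with components γ^i_0 = ξ^i - (1/2) q^j_t ∂^t_j ξ^i and γ^i_k = (1/2) ∂^t_k ξ^i is symmetric, i.e., ∂^t_j γ^k_i = ∂^t_i γ^k_j and γ^k_i = ∂^t_i γ^k_0 + q^j_t ∂^t_i γ^k_j, provided ξ^i are twice continuously differentiable in the velocity variables. -/
/-- Partial derivative in the i-th velocity coordinate. -/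
noncomputable def pd {m : ℕ} (f : (Fin m → ℝ) → ℝ) (v : Fin m → ℝ) (i : Fin m) : ℝ :=
  fderiv ℝ f v (Pi.single i 1)

/-!
Since `γ^k_i = ½ ∂_i ξ^k`, the identity `∂_j γ^k_i = ∂_i γ^k_j` is the symmetry of the second
derivative of the `C²` function `ξ^k`. For the other identity, the product rule gives
`∂_i (q^j_t ∂_j ξ^k) = ∂_i ξ^k + q^j_t ∂_i ∂_j ξ^k`, so
`∂_i γ^k_0 = ½ ∂_i ξ^k - q^j_t ∂_i γ^k_j = γ^k_i - q^j_t ∂_i γ^k_j`.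
-/

section PartialDerivative

variable {m : ℕ} {f g : (Fin m → ℝ) → ℝ} {v : Fin m → ℝ} {i j : Fin m}

lemma differentiable_fderiv_of_contDiff_two (hf : ContDiff ℝ 2 f) :
    Differentiable ℝ (fderiv ℝ f) :=
  (hf.fderiv_right (m := 1) (by norm_num)).differentiable (by norm_num)

lemma pd_const_mul (c : ℝ) : pd (fun x => c * f x) v i = c * pd f v i := by
  change fderiv ℝ (c • f) v _ = _
  rw [fderiv_const_smul_field]
  rfl

lemma pd_sub (hf : DifferentiableAt ℝ f v) (hg : DifferentiableAt ℝ g v) :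
    pd (fun x => f x - g x) v i = pd f v i - pd g v i := by
  simp only [pd, fderiv_fun_sub hf hg, sub_apply]

lemma pd_sum {ι : Type*} (s : Finset ι) {F : ι → (Fin m → ℝ) → ℝ}
    (hF : ∀ j ∈ s, DifferentiableAt ℝ (F j) v) :
    pd (fun x => ∑ j ∈ s, F j x) v i = ∑ j ∈ s, pd (F j) v i := by
  simp only [pd, fderiv_fun_sum hF, sum_apply]

lemma pd_coord_mul (hg : DifferentiableAt ℝ g v) :
    pd (fun x => x j * g x) v i = v j * pd g v i + (Pi.single i 1 : Fin m → ℝ) j * g v := by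
  have hcoord := hasFDerivAt_apply (𝕜 := ℝ) j v
  simp only [pd, fderiv_fun_mul hcoord.differentiableAt hg, hcoord.fderiv,
    add_apply, smul_apply, ContinuousLinearMap.proj_apply, smul_eq_mul, mul_comm (g v)]

lemma pd_pd_eq_fderiv_fderiv (hf : ContDiff ℝ 2 f) :
    pd (fun x => pd f x j) v i = fderiv ℝ (fderiv ℝ f) v (Pi.single i 1) (Pi.single j 1) := by
  simp only [pd, fderiv_clm_apply (differentiable_fderiv_of_contDiff_two hf v) (differentiableAt_const _), fderiv_const_apply,
    ContinuousLinearMap.comp_zero, ContinuousLinearMap.flip_apply, zero_add]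

lemma pd_pd_comm (hf : ContDiff ℝ 2 f) :
    pd (fun x => pd f x j) v i = pd (fun x => pd f x i) v j := by
  rw [pd_pd_eq_fderiv_fderiv hf, pd_pd_eq_fderiv_fderiv hf]
  exact (hf.contDiffAt.isSymmSndFDerivAt (by simp)).eq _ _

lemma ContDiff.differentiable_pd (hf : ContDiff ℝ 2 f) (j : Fin m) :
    Differentiable ℝ (fun x => pd f x j) :=
  fun x => (differentiable_fderiv_of_contDiff_two hf x).clm_apply (differentiableAt_const _)

lemma pd_sub_const_mul_euler_sum (hf : ContDiff ℝ 2 f) (c : ℝ) :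
    pd (fun x => f x - c * ∑ j, x j * pd f x j) v i
      = (1 - c) * pd f v i - ∑ j, v j * pd (fun x => c * pd f x j) v i := by
  have hdf : Differentiable ℝ f := hf.differentiable (by norm_num)
  have hterm (j : Fin m) : DifferentiableAt ℝ (fun x => x j * pd f x j) v :=
    (differentiableAt_apply j v).mul (hf.differentiable_pd j v)
  rw [pd_sub (hdf v) ((DifferentiableAt.fun_sum fun j _ => hterm j).const_mul _), pd_const_mul,
    pd_sum _ fun j _ => hterm j]
  simp only [pd_coord_mul (hf.differentiable_pd _ v), pd_const_mul, Finset.sum_add_distrib,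
    Pi.single_apply, ite_mul, one_mul, zero_mul, Finset.sum_ite_eq', Finset.mem_univ, if_true,
    mul_left_comm (v _) c, ← Finset.mul_sum]
  ring

end PartialDerivative

theorem stmt4 (m : ℕ) (ξ : Fin m → (Fin m → ℝ) → ℝ)
    (hξ : ∀ k, ContDiff ℝ 2 (ξ k))
    (γ : Fin m → Fin m → (Fin m → ℝ) → ℝ)
    (γ0 : Fin m → (Fin m → ℝ) → ℝ)
    (hγ : ∀ k i v, γ k i v = (1/2) * pd (ξ k) v i)
    (hγ0 : ∀ k v, γ0 k v = ξ k v - (1/2) * ∑ j, v j * pd (ξ k) v j) :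
    (∀ k i v, γ k i v = pd (γ0 k) v i + ∑ j, v j * pd (γ k j) v i) ∧
    (∀ k i j v, pd (γ k i) v j = pd (γ k j) v i) := by
  have hγ' (k j : Fin m) : γ k j = fun x => (1/2) * pd (ξ k) x j := funext (hγ k j)
  have hγ0' (k : Fin m) : γ0 k = fun x => ξ k x - (1/2) * ∑ j, x j * pd (ξ k) x j :=
    funext (hγ0 k)
  refine ⟨fun k i v => ?_, fun k i j v => ?_⟩
  · rw [hγ k i v, hγ0' k, pd_sub_const_mul_euler_sum (hξ k)]
    simp only [hγ']
    ring
  · rw [hγ' k i, hγ' k j, pd_const_mul, pd_const_mul, pd_pd_comm (hξ k)]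
end

section
/- Every quadratic dynamic equation q^i_{tt} = a^i_{jk}(q) q^j_t q^k_t + b^i_j(q) q^j_t + f^i(q) on Q → ℝ is equivalent to the geodesic equation q̈^0 = 0, q̇^0 = 1, q̈^i = a^i_{jk} q̇^j q̇^k + b^i_j q̇^j q̇^0 + f^i q̇^0 q̇^0 on TQ with respect to the linear connection K with components K_λ{}^0{}_ν = 0, K_0{}^i{}_0 = f^i, K_0{}^i{}_j = (1/2) b^i_j, K_j{}^i{}_0 = (1/2) b^i_j, K_k{}^i{}_j = a^i_{kj}: a curve c(t) = (t, c^i(t)) solves the dynamic equation iff its tangent lift (with q̇^0 ≡ 1) solves the geodesic equation. -/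
/-! Along a curve `t ↦ (t, c t)` the time component of the velocity is identically `1`, so in the
contraction `K_μ{}^i{}_ν v^μ v^ν` the entries with one time index pick up `b` linearly (the two
halves `½ b` add up) and the entry with two time indices picks up `f`: the `i`-th geodesic
equation is the `i`-th dynamic equation, while the time equation reads `0 = 0`. -/

open Finset

section Contraction

variable {ι : Type*} [Fintype ι]

theorem sum_option_quadratic_of_none_eq_one (Γ : Option ι → Option ι → ℝ) (v : Option ι → ℝ)
    (hv : v none = 1) :
    ∑ μ, ∑ ν, Γ μ ν * v μ * v ν =
      ∑ j, ∑ k, Γ (some j) (some k) * v (some j) * v (some k)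
        + ∑ j, (Γ none (some j) + Γ (some j) none) * v (some j) + Γ none none := by
  simp only [Fintype.sum_option, hv, mul_one, add_mul, sum_add_distrib]
  ring

theorem sum_christoffel_contraction_some (K : Option ι → Option ι → Option ι → ℝ)
    (a : ι → ι → ι → ℝ) (b : ι → ι → ℝ) (f : ι → ℝ) (i : ι) (v : Option ι → ℝ)
    (hv : v none = 1) (hK00 : K none (some i) none = f i)
    (hK0j : ∀ j, K none (some i) (some j) = (1/2) * b i j)
    (hKj0 : ∀ j, K (some j) (some i) none = (1/2) * b i j)
    (hKkj : ∀ k j, K (some k) (some i) (some j) = a i k j) :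
    ∑ μ, ∑ ν, K μ (some i) ν * v μ * v ν =
      ∑ j, ∑ k, a i j k * v (some j) * v (some k) + ∑ j, b i j * v (some j) + f i := by
  rw [sum_option_quadratic_of_none_eq_one _ v hv]
  simp only [hK00, hK0j, hKj0, hKkj, ← add_mul, add_halves, one_mul]

end Contraction

theorem stmt10_general (m : ℕ)
    (a : Fin m → Fin m → Fin m → (ℝ × (Fin m → ℝ)) → ℝ)
    (b : Fin m → Fin m → (ℝ × (Fin m → ℝ)) → ℝ)
    (f : Fin m → (ℝ × (Fin m → ℝ)) → ℝ)
    (K : Option (Fin m) → Option (Fin m) → Option (Fin m) → (ℝ × (Fin m → ℝ)) → ℝ)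
    (hK0 : ∀ μ ν x, K μ none ν x = 0)
    (hK00 : ∀ i x, K none (some i) none x = f i x)
    (hK0j : ∀ i j x, K none (some i) (some j) x = (1/2) * b i j x)
    (hKj0 : ∀ i j x, K (some j) (some i) none x = (1/2) * b i j x)
    (hKkj : ∀ i k j x, K (some k) (some i) (some j) x = a i k j x)
    (c : ℝ → Fin m → ℝ)
    (X : ℝ → Option (Fin m) → ℝ)
    (hX : ∀ s, X s none = s ∧ ∀ i, X s (some i) = c s i) :
    (∀ t i, deriv (deriv fun s => c s i) t =
        ∑ j, ∑ k, a i j k (t, c t) * deriv (fun s => c s j) t * deriv (fun s => c s k) t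
          + ∑ j, b i j (t, c t) * deriv (fun s => c s j) t + f i (t, c t)) ↔
    (∀ t (l : Option (Fin m)), deriv (deriv fun s => X s l) t =
        ∑ μ, ∑ ν, K μ l ν (t, c t) * deriv (fun s => X s μ) t * deriv (fun s => X s ν) t) := by
  have hXnone : (fun s => X s none) = id := funext fun s => (hX s).1
  have hXsome : ∀ i, (fun s => X s (some i)) = fun s => c s i :=
    fun i => funext fun s => (hX s).2 i
  have hvel : ∀ t, deriv (fun s => X s none) t = 1 := by simp [hXnone]
  have hgeod : ∀ t i,
      ∑ μ, ∑ ν, K μ (some i) ν (t, c t) * deriv (fun s => X s μ) t * deriv (fun s => X s ν) t =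
        ∑ j, ∑ k, a i j k (t, c t) * deriv (fun s => c s j) t * deriv (fun s => c s k) t
          + ∑ j, b i j (t, c t) * deriv (fun s => c s j) t + f i (t, c t) := by
    intro t i
    rw [sum_christoffel_contraction_some (K · · · (t, c t)) (a · · · (t, c t)) (b · · (t, c t)) (f · (t, c t)) i _
      (hvel t) (hK00 i _) (hK0j i · _) (hKj0 i · _) (hKkj i · · _)]
    simp only [hXsome]
  simp only [Option.forall, hXnone, hXsome, hgeod, hK0, zero_mul, sum_const_zero, deriv_id',
    deriv_const', true_and]

theorem stmt10 (m : ℕ)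
    (a : Fin m → Fin m → Fin m → (ℝ × (Fin m → ℝ)) → ℝ)
    (b : Fin m → Fin m → (ℝ × (Fin m → ℝ)) → ℝ)
    (f : Fin m → (ℝ × (Fin m → ℝ)) → ℝ)
    (hasym : ∀ i j k x, a i j k x = a i k j x)
    (K : Option (Fin m) → Option (Fin m) → Option (Fin m) → (ℝ × (Fin m → ℝ)) → ℝ)
    (hK0 : ∀ μ ν x, K μ none ν x = 0)
    (hK00 : ∀ i x, K none (some i) none x = f i x)
    (hK0j : ∀ i j x, K none (some i) (some j) x = (1/2) * b i j x)
    (hKj0 : ∀ i j x, K (some j) (some i) none x = (1/2) * b i j x)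
    (hKkj : ∀ i k j x, K (some k) (some i) (some j) x = a i k j x)
    (c : ℝ → Fin m → ℝ) (hc : ∀ i, ContDiff ℝ 2 (fun t => c t i))
    (X : ℝ → Option (Fin m) → ℝ)
    (hX : ∀ s, X s none = s ∧ ∀ i, X s (some i) = c s i) :
    (∀ t i, deriv (deriv fun s => c s i) t =
        ∑ j, ∑ k, a i j k (t, c t) * deriv (fun s => c s j) t * deriv (fun s => c s k) t
          + ∑ j, b i j (t, c t) * deriv (fun s => c s j) t + f i (t, c t)) ↔
    (∀ t (l : Option (Fin m)), deriv (deriv fun s => X s l) t =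
        ∑ μ, ∑ ν, K μ l ν (t, c t) * deriv (fun s => X s μ) t * deriv (fun s => X s ν) t) :=
  stmt10_general m a b f K hK0 hK00 hK0j hKj0 hKkj c X hX
end

section
/- Given a connection Γ = ∂_t + Γ^i ∂_i on Q → ℝ and a connection K on the tangent bundle TQ → Q with components K^0_λ, K^i_λ, the modified components K̃^0_λ = 0, K̃^i_λ = K^i_λ - Γ^i K^0_λ satisfy the transformation law of a connection on TQ → Q; i.e., K̃ is again a connection on TQ → Q. -/
open Finset

theorem sum_mul_sub_mul_const {ι R : Type*} [Fintype ι] [CommRing R] (w a b : ι → R) (c : R) :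
    ∑ j, w j * (a j - b j * c) = ∑ j, w j * a j - (∑ j, w j * b j) * c := by
  simp only [mul_sub, sum_sub_distrib, sum_mul, mul_assoc]

theorem stmt11 (m : ℕ)
    (K0 : Option (Fin m) → ℝ) (Ki : Fin m → Option (Fin m) → ℝ)
    (Γ : Fin m → ℝ) (J : Fin m → Fin m → ℝ) (Jt : Fin m → ℝ)
    (P : Option (Fin m) → Option (Fin m) → ℝ)
    (D : Fin m → Option (Fin m) → ℝ)
    (K'0 : Option (Fin m) → ℝ) (K'i : Fin m → Option (Fin m) → ℝ) (Γ' : Fin m → ℝ)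
    (hK'0 : ∀ μ, K'0 μ = ∑ α, K0 α * P α μ)
    (hK'i : ∀ i μ, K'i i μ =
      ∑ α, (Jt i * K0 α + ∑ j, J i j * Ki j α + D i α) * P α μ)
    (hΓ' : ∀ i, Γ' i = ∑ j, J i j * Γ j + Jt i) :
    ∀ i μ, K'i i μ - Γ' i * K'0 μ =
      ∑ α, (∑ j, J i j * (Ki j α - Γ j * K0 α) + D i α) * P α μ := by
  intro i μ
  rw [hK'i, hK'0, mul_sum, ← sum_sub_distrib]
  refine sum_congr rfl fun α _ => ?_
  -- the inhomogeneous terms ∂_t q'^i of K' and Γ' cancel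
  rw [sum_mul_sub_mul_const, hΓ']
  ring
end

section
/- For the non-degenerate quadratic Lagrangian L = (1/2) m_{ij}(x^μ) x^i_0 x^j_0 + k_i(x^μ) x^i_0 + f(x^μ), the identity L = -(1/2) g_{αμ} x^α_0 x^μ_0 with x^0_0 = 1 holds, where g_{00} = -2f, g_{0i} = g_{i0} = -k_i, g_{ij} = -m_{ij}; moreover the Euler–Lagrange equations of L take the form m_{ik} x^k_{00} = -{_{λiν}} x^λ_0 x^ν_0 with x^0_0 = 1, where {_{λμν}} = -(1/2)(∂_λ g_{μν} + ∂_ν g_{μλ} - ∂_μ g_{λν}) are the Christoffel symbols of g. -/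
/-- Partial derivative in the time direction on ℝ × ℝ^m. -/
noncomputable def pdt {m : ℕ} (F : ℝ × (Fin m → ℝ) → ℝ) (x : ℝ × (Fin m → ℝ)) : ℝ :=
  fderiv ℝ F x (1, 0)

/-- Partial derivative in the j-th fibre direction on ℝ × ℝ^m. -/
noncomputable def pdq {m : ℕ} (j : Fin m) (F : ℝ × (Fin m → ℝ) → ℝ)
    (x : ℝ × (Fin m → ℝ)) : ℝ :=
  fderiv ℝ F x (0, Pi.single j 1)

/-- Partial derivative indexed by Option (Fin m) ≃ {0,1,…,m}, 0 = time. -/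
noncomputable def pdo {m : ℕ} (α : Option (Fin m)) (F : ℝ × (Fin m → ℝ) → ℝ)
    (x : ℝ × (Fin m → ℝ)) : ℝ :=
  α.elim (pdt F x) (fun j => pdq j F x)


open ContinuousLinearMap in
lemma fiberDeriv (m : ℕ) (A : Fin m → Fin m → ℝ) (b : Fin m → ℝ) (cst : ℝ)
    (v : Fin m → ℝ) (i : Fin m) (hA : ∀ p q, A p q = A q p) :
    fderiv ℝ (fun v : Fin m → ℝ => (1/2) * ∑ p, ∑ q, A p q * v p * v q + ∑ p, b p * v p + cst)
      v (Pi.single i 1) = ∑ j, A i j * v j + b i := by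
  have hp : ∀ p : Fin m, HasFDerivAt (fun v : Fin m → ℝ => v p)
      (ContinuousLinearMap.proj p : (Fin m → ℝ) →L[ℝ] ℝ) v := fun p => hasFDerivAt_apply p v
  have hterm : ∀ p q : Fin m, HasFDerivAt (fun v : Fin m → ℝ => A p q * v p * v q)
      ((A p q * v p) • ContinuousLinearMap.proj q + v q • (A p q • ContinuousLinearMap.proj p)) v :=
    fun p q => ((hp p).const_mul (A p q)).mul (hp q)
  have hsum : HasFDerivAt (fun v : Fin m → ℝ => ∑ p, ∑ q, A p q * v p * v q)
      (∑ p, ∑ q, ((A p q * v p) • ContinuousLinearMap.proj q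
        + v q • (A p q • ContinuousLinearMap.proj p))) v :=
    HasFDerivAt.fun_sum fun p _ => HasFDerivAt.fun_sum fun q _ => hterm p q
  have hkin : HasFDerivAt (fun v : Fin m → ℝ => ∑ p, b p * v p)
      (∑ p, b p • ContinuousLinearMap.proj p) v :=
    HasFDerivAt.fun_sum fun p _ => (hp p).const_mul (b p)
  have htot := ((hsum.const_mul (1/2)).fun_add hkin).add_const cst
  rw [htot.fderiv]
  simp [ContinuousLinearMap.sum_apply, Pi.single_apply, mul_ite, ite_mul,
    Finset.sum_ite_eq, Finset.sum_ite_eq']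
  have h1 : ∀ x : Fin m, ∑ x_1 : Fin m,
      ((if x_1 = i then A x x_1 * v x else 0) + if x = i then v x_1 * A x x_1 else 0)
      = A x i * v x + (if x = i then ∑ x_1, v x_1 * A x x_1 else 0) := by
    intro x
    rw [Finset.sum_add_distrib, Finset.sum_ite_eq' Finset.univ i (fun x_1 => A x x_1 * v x)]
    simp
  simp only [h1, Finset.sum_add_distrib, Finset.sum_ite_eq', Finset.mem_univ, if_true]
  have h2 : ∑ x : Fin m, A x i * v x = ∑ j, A i j * v j :=
    Finset.sum_congr rfl fun x _ => by rw [hA]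
  have h3 : ∑ x : Fin m, v x * A i x = ∑ j, A i j * v j :=
    Finset.sum_congr rfl fun x _ => mul_comm _ _
  rw [h2, h3]
  ring

lemma baseDeriv {m : ℕ} (M : Fin m → Fin m → ℝ × (Fin m → ℝ) → ℝ)
    (k : Fin m → ℝ × (Fin m → ℝ) → ℝ) (f : ℝ × (Fin m → ℝ) → ℝ)
    (x u : ℝ × (Fin m → ℝ)) (v : Fin m → ℝ)
    (hM : ∀ p q, DifferentiableAt ℝ (M p q) x) (hk : ∀ p, DifferentiableAt ℝ (k p) x)
    (hf : DifferentiableAt ℝ f x) :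
    fderiv ℝ (fun y => (1/2) * ∑ p, ∑ q, M p q y * v p * v q + ∑ p, k p y * v p + f y) x u
      = (1/2) * ∑ p, ∑ q, fderiv ℝ (M p q) x u * v p * v q
        + ∑ p, fderiv ℝ (k p) x u * v p + fderiv ℝ f x u := by
  have hterm : ∀ p q : Fin m, HasFDerivAt (fun y => M p q y * v p * v q)
      (v q • (v p • fderiv ℝ (M p q) x)) x :=
    fun p q => (((hM p q).hasFDerivAt.mul_const (v p)).mul_const (v q))
  have hsum : HasFDerivAt (fun y => ∑ p, ∑ q, M p q y * v p * v q)
      (∑ p, ∑ q, v q • (v p • fderiv ℝ (M p q) x)) x :=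
    HasFDerivAt.fun_sum fun p _ => HasFDerivAt.fun_sum fun q _ => hterm p q
  have hksum : HasFDerivAt (fun y => ∑ p, k p y * v p)
      (∑ p, v p • fderiv ℝ (k p) x) x :=
    HasFDerivAt.fun_sum fun p _ => (hk p).hasFDerivAt.mul_const (v p)
  have htot := ((hsum.const_mul (1/2)).fun_add hksum).fun_add hf.hasFDerivAt
  rw [htot.fderiv]
  simp only [ContinuousLinearMap.add_apply, ContinuousLinearMap.smul_apply,
    ContinuousLinearMap.sum_apply, smul_eq_mul]
  congr 1
  · congr 1
    · congr 1
      exact Finset.sum_congr rfl fun p _ => Finset.sum_congr rfl fun q _ => by ring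
    · exact Finset.sum_congr rfl fun p _ => by ring

lemma chainDeriv {m : ℕ} (F : ℝ × (Fin m → ℝ) → ℝ) (c : ℝ → Fin m → ℝ) (t : ℝ)
    (w : Fin m → ℝ) (hF : DifferentiableAt ℝ F (t, c t))
    (hc : ∀ j, HasDerivAt (fun s => c s j) (w j) t) :
    HasDerivAt (fun s => F (s, c s)) (pdt F (t, c t) + ∑ j, pdq j F (t, c t) * w j) t := by
  have hγ : HasDerivAt (fun s => ((s, c s) : ℝ × (Fin m → ℝ))) (1, w) t :=
    (hasDerivAt_id t).prodMk (hasDerivAt_pi.mpr hc)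
  have h := hF.hasFDerivAt.comp_hasDerivAt t hγ
  have hsplit : ((1:ℝ), w) = ((1:ℝ), (0 : Fin m → ℝ))
      + ∑ j, w j • ((0:ℝ), (Pi.single j 1 : Fin m → ℝ)) := by
    rw [Prod.ext_iff]
    constructor
    · simp [Prod.fst_sum]
    · simp [Prod.snd_sum, funext_iff, Finset.sum_apply, Pi.single_apply,
        Finset.sum_ite_eq, Finset.sum_ite_eq']
  have hval : fderiv ℝ F (t, c t) ((1 : ℝ), w)
      = pdt F (t, c t) + ∑ j, pdq j F (t, c t) * w j := by
    rw [hsplit, map_add, map_sum]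
    simp only [map_smul, smul_eq_mul, pdt, pdq]
    congr 1
    exact Finset.sum_congr rfl fun j _ => by ring
  rw [hval] at h
  exact h

lemma sumAlg {m : ℕ} (P R : Fin m → Fin m → ℝ) (A B C w : Fin m → ℝ) (u v : ℝ) :
    -(1/2) * (-u + -u - -2 * v) * 1 * 1
      + ∑ x, -(1/2) * (-A x + -B x - -C x) * 1 * w x
      + ∑ x, (-(1/2) * (-B x + -A x - -C x) * w x * 1
        + ∑ y, -(1/2) * (-P x y + -P y x - -R x y) * w x * w y)
    = ∑ x, A x * w x + ∑ x, ∑ y, P x y * w x * w y + u + ∑ x, B x * w x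
      - 1/2 * ∑ x, ∑ y, R x y * w x * w y - ∑ x, C x * w x - v := by
  rw [Finset.sum_add_distrib]
  have eL1 : ∑ x, -(1/2:ℝ) * (-A x + -B x - -C x) * 1 * w x
      = ∑ x, ((1/2) * (A x * w x) + (1/2) * (B x * w x) - (1/2) * (C x * w x)) :=
    Finset.sum_congr rfl fun x _ => by ring
  have eL2 : ∑ x, -(1/2:ℝ) * (-B x + -A x - -C x) * w x * 1
      = ∑ x, ((1/2) * (A x * w x) + (1/2) * (B x * w x) - (1/2) * (C x * w x)) :=
    Finset.sum_congr rfl fun x _ => by ring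
  have eD : ∑ x, ∑ y, -(1/2:ℝ) * (-P x y + -P y x - -R x y) * w x * w y
      = ∑ x, ∑ y, ((1/2) * (P x y * w x * w y) + (1/2) * (P y x * w x * w y)
        - (1/2) * (R x y * w x * w y)) :=
    Finset.sum_congr rfl fun x _ => Finset.sum_congr rfl fun y _ => by ring
  rw [eL1, eL2, eD]
  simp only [Finset.sum_add_distrib, Finset.sum_sub_distrib]
  simp only [← Finset.mul_sum]
  have e3 : ∑ x, ∑ y, P y x * w x * w y = ∑ x, ∑ y, P x y * w x * w y := by
    rw [Finset.sum_comm]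
    exact Finset.sum_congr rfl fun x _ => Finset.sum_congr rfl fun y _ => by ring
  rw [e3]
  ring


/- STATEMENT 17: For the quadratic Lagrangian
   L = (1/2) m_{ij} x^i_0 x^j_0 + k_i x^i_0 + f, one has
   L = -(1/2) g_{αμ} x^α_0 x^μ_0 with x^0_0 = 1, where g_{00} = -2f,
   g_{0i} = g_{i0} = -k_i, g_{ij} = -m_{ij}; and the Euler–Lagrange equations
   d_t(∂L/∂x^i_0) - ∂L/∂x^i = 0 take the geodesic-type form
   m_{ik} x^k_{00} = -{_{λiν}} x^λ_0 x^ν_0 with x^0_0 = 1, where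
   {_{λμν}} = -(1/2)(∂_λ g_{μν} + ∂_ν g_{μλ} - ∂_μ g_{λν}). -/
theorem stmt17 (m : ℕ)
    (M : Fin m → Fin m → ℝ × (Fin m → ℝ) → ℝ)
    (k : Fin m → ℝ × (Fin m → ℝ) → ℝ) (f : ℝ × (Fin m → ℝ) → ℝ)
    (hMsym : ∀ i j x, M i j x = M j i x)
    (hM : ∀ i j, ContDiff ℝ 1 (M i j)) (hk : ∀ i, ContDiff ℝ 1 (k i))
    (hf : ContDiff ℝ 1 f)
    (L : ℝ × (Fin m → ℝ) → (Fin m → ℝ) → ℝ)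
    (hL : ∀ x v, L x v = (1/2) * ∑ i, ∑ j, M i j x * v i * v j
      + ∑ i, k i x * v i + f x)
    (g : Option (Fin m) → Option (Fin m) → ℝ × (Fin m → ℝ) → ℝ)
    (hg00 : ∀ x, g none none x = -2 * f x)
    (hg0i : ∀ i x, g none (some i) x = -k i x)
    (hgi0 : ∀ i x, g (some i) none x = -k i x)
    (hgij : ∀ i j x, g (some i) (some j) x = -M i j x)
    (Γlow : Option (Fin m) → Option (Fin m) → Option (Fin m) → ℝ × (Fin m → ℝ) → ℝ)
    (hΓlow : ∀ l μ ν x, Γlow l μ ν x =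
      -(1/2) * (pdo l (g μ ν) x + pdo ν (g μ l) x - pdo μ (g l ν) x)) :
    -- (1) the algebraic identity L = -(1/2) g_{αμ} x^α_0 x^μ_0 with x^0_0 = 1
    (∀ x v, L x v =
      -(1/2) * ∑ α, ∑ μ, g α μ x * (α.elim 1 v) * (μ.elim 1 v)) ∧
    -- (2) the Euler–Lagrange equations are the stated geodesic-type equations
    (∀ c : ℝ → Fin m → ℝ, (∀ i, ContDiff ℝ 2 (fun t => c t i)) →
      ((∀ t i, deriv (fun s =>
            fderiv ℝ (L (s, c s)) (fun j => deriv (fun r => c r j) s)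
              (Pi.single i 1)) t
          - pdq i (fun x => L x (fun j => deriv (fun r => c r j) t)) (t, c t) = 0)
       ↔
       (∀ t i, ∑ j, M i j (t, c t) * deriv (deriv fun s => c s j) t =
          -∑ l, ∑ ν, Γlow l (some i) ν (t, c t)
            * (l.elim 1 fun p => deriv (fun r => c r p) t)
            * (ν.elim 1 fun p => deriv (fun r => c r p) t)))) := by
  constructor
  · intro x v
    rw [hL x v, Fintype.sum_option]
    simp only [Fintype.sum_option, Option.elim_none, Option.elim_some, hg00, hg0i, hgi0, hgij]
    simp only [Finset.sum_add_distrib, neg_mul, Finset.sum_neg_distrib, mul_one]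
    ring_nf
  · intro c hc
    -- basic differentiability facts
    have hMd : ∀ p q (x : ℝ × (Fin m → ℝ)), DifferentiableAt ℝ (M p q) x :=
      fun p q x => ((hM p q).differentiable one_ne_zero).differentiableAt
    have hkd : ∀ p (x : ℝ × (Fin m → ℝ)), DifferentiableAt ℝ (k p) x :=
      fun p x => ((hk p).differentiable one_ne_zero).differentiableAt
    have hfd : ∀ x : ℝ × (Fin m → ℝ), DifferentiableAt ℝ f x :=
      fun x => ((hf.differentiable one_ne_zero)).differentiableAt
    have hcd : ∀ j, Differentiable ℝ (fun s => c s j) :=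
      fun j => (hc j).differentiable (by norm_num)
    have hcder : ∀ j, Differentiable ℝ (deriv (fun s => c s j)) := by
      intro j
      have h2 : ContDiff ℝ (1 + 1) (fun s => c s j) := by
        have : ((1 : WithTop ℕ∞) + 1) = 2 := by norm_num
        rw [this]; exact hc j
      exact ((contDiff_succ_iff_deriv.mp h2).2.2).differentiable one_ne_zero
    have hw : ∀ (t : ℝ) (j : Fin m),
        HasDerivAt (fun s => c s j) (deriv (fun r => c r j) t) t :=
      fun t j => ((hcd j) t).hasDerivAt
    -- derivative component lemmas for g
    have hd00 : ∀ (α : Option (Fin m)) x, pdo α (g none none) x = -2 * pdo α f x := by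
      intro α x
      have hge : g none none = fun y => -2 * f y := funext hg00
      have hcm : ∀ u : ℝ × (Fin m → ℝ), fderiv ℝ (fun y => (2:ℝ) * f y) x u
          = 2 * fderiv ℝ f x u := by
        intro u; rw [fderiv_const_mul (hfd x)]; simp
      rw [hge]
      cases α <;> simp [pdo, pdt, pdq, hcm]
    have hd0i : ∀ (α : Option (Fin m)) j x, pdo α (g none (some j)) x = -(pdo α (k j) x) := by
      intro α j x
      have hge : g none (some j) = fun y => -(k j y) := funext fun y => by
        rw [hg0i j y]
      rw [hge]
      cases α <;> simp [pdo, pdt, pdq, fderiv_neg]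
    have hdi0 : ∀ (α : Option (Fin m)) j x, pdo α (g (some j) none) x = -(pdo α (k j) x) := by
      intro α j x
      have hge : g (some j) none = fun y => -(k j y) := funext fun y => by
        rw [hgi0 j y]
      rw [hge]
      cases α <;> simp [pdo, pdt, pdq, fderiv_neg]
    have hdij : ∀ (α : Option (Fin m)) p q x,
        pdo α (g (some p) (some q)) x = -(pdo α (M p q) x) := by
      intro α p q x
      have hge : g (some p) (some q) = fun y => -(M p q y) := funext fun y => by
        rw [hgij p q y]
      rw [hge]
      cases α <;> simp [pdo, pdt, pdq, fderiv_neg]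
    -- momentum function rewrite
    have hPfun : ∀ i : Fin m,
        (fun s => fderiv ℝ (L (s, c s)) (fun j => deriv (fun r => c r j) s) (Pi.single i 1))
        = fun s => ∑ j, M i j (s, c s) * deriv (fun r => c r j) s + k i (s, c s) := by
      intro i; funext s
      have hLs : L (s, c s) = fun v => (1/2) * ∑ p, ∑ q, M p q (s, c s) * v p * v q
          + ∑ p, k p (s, c s) * v p + f (s, c s) := funext fun v => hL _ v
      rw [hLs, fiberDeriv m (fun p q => M p q (s, c s)) (fun p => k p (s, c s)) (f (s, c s))
        _ i (fun p q => hMsym p q (s, c s))]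
    -- key identity
    have key : ∀ (t : ℝ) (i : Fin m),
        (deriv (fun s => fderiv ℝ (L (s, c s)) (fun j => deriv (fun r => c r j) s)
            (Pi.single i 1)) t
          - pdq i (fun x => L x (fun j => deriv (fun r => c r j) t)) (t, c t))
        = ∑ j, M i j (t, c t) * deriv (deriv fun s => c s j) t
          + ∑ l, ∑ ν, Γlow l (some i) ν (t, c t)
            * (l.elim 1 fun p => deriv (fun r => c r p) t)
            * (ν.elim 1 fun p => deriv (fun r => c r p) t) := by
      intro t i
      have hDer : HasDerivAt
          (fun s => ∑ j, M i j (s, c s) * deriv (fun r => c r j) s + k i (s, c s))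
          (∑ j, ((pdt (M i j) (t, c t)
              + ∑ l, pdq l (M i j) (t, c t) * deriv (fun r => c r l) t)
                * deriv (fun r => c r j) t
              + M i j (t, c t) * deriv (deriv fun s => c s j) t)
            + (pdt (k i) (t, c t)
              + ∑ l, pdq l (k i) (t, c t) * deriv (fun r => c r l) t)) t := by
        refine HasDerivAt.add ?_ ?_
        · refine HasDerivAt.fun_sum fun j _ => ?_
          refine HasDerivAt.mul ?_ ?_
          · exact chainDeriv (M i j) c t _ (hMd i j _) (fun p => hw t p)
          · exact ((hcder j) t).hasDerivAt
        · exact chainDeriv (k i) c t _ (hkd i _) (fun p => hw t p)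
      have hDval : deriv (fun s => fderiv ℝ (L (s, c s))
            (fun j => deriv (fun r => c r j) s) (Pi.single i 1)) t
          = ∑ j, ((pdt (M i j) (t, c t)
              + ∑ l, pdq l (M i j) (t, c t) * deriv (fun r => c r l) t)
                * deriv (fun r => c r j) t
              + M i j (t, c t) * deriv (deriv fun s => c s j) t)
            + (pdt (k i) (t, c t)
              + ∑ l, pdq l (k i) (t, c t) * deriv (fun r => c r l) t) := by
        rw [hPfun i]; exact hDer.deriv
      have hQ : pdq i (fun x => L x (fun j => deriv (fun r => c r j) t)) (t, c t)
          = (1/2) * ∑ p, ∑ q, pdq i (M p q) (t, c t)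
              * deriv (fun r => c r p) t * deriv (fun r => c r q) t
            + ∑ p, pdq i (k p) (t, c t) * deriv (fun r => c r p) t
            + pdq i f (t, c t) := by
        have hLe : (fun x => L x (fun j => deriv (fun r => c r j) t))
            = fun y => (1/2) * ∑ p, ∑ q, M p q y
                * deriv (fun r => c r p) t * deriv (fun r => c r q) t
              + ∑ p, k p y * deriv (fun r => c r p) t + f y := funext fun y => hL y _
        rw [pdq, hLe, baseDeriv M k f (t, c t) (0, Pi.single i 1) _
          (fun p q => hMd p q _) (fun p => hkd p _) (hfd _)]
        rfl
      have hGval : (∑ l, ∑ ν, Γlow l (some i) ν (t, c t)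
            * (l.elim 1 fun p => deriv (fun r => c r p) t)
            * (ν.elim 1 fun p => deriv (fun r => c r p) t))
          = ∑ j, pdt (M i j) (t, c t) * deriv (fun r => c r j) t
            + ∑ l, ∑ j, pdq l (M i j) (t, c t)
                * deriv (fun r => c r l) t * deriv (fun r => c r j) t
            + pdt (k i) (t, c t)
            + ∑ l, pdq l (k i) (t, c t) * deriv (fun r => c r l) t
            - (1/2) * ∑ p, ∑ q, pdq i (M p q) (t, c t)
                * deriv (fun r => c r p) t * deriv (fun r => c r q) t
            - ∑ p, pdq i (k p) (t, c t) * deriv (fun r => c r p) t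
            - pdq i f (t, c t) := by
        rw [Fintype.sum_option]
        simp only [Fintype.sum_option, Option.elim_none, Option.elim_some, hΓlow,
          hd00, hd0i, hdi0, hdij]
        simp only [pdo, Option.elim_none, Option.elim_some]
        exact sumAlg (fun l j => pdq l (M i j) (t, c t)) (fun p q => pdq i (M p q) (t, c t))
          (fun j => pdt (M i j) (t, c t)) (fun l => pdq l (k i) (t, c t))
          (fun p => pdq i (k p) (t, c t)) (fun l => deriv (fun r => c r l) t)
          (pdt (k i) (t, c t)) (pdq i f (t, c t))
      rw [hDval, hQ, hGval]
      have eone : ∑ j, ((pdt (M i j) (t, c t)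
            + ∑ l, pdq l (M i j) (t, c t) * deriv (fun r => c r l) t)
              * deriv (fun r => c r j) t
            + M i j (t, c t) * deriv (deriv fun s => c s j) t)
          = ∑ j, pdt (M i j) (t, c t) * deriv (fun r => c r j) t
            + ∑ l, ∑ j, pdq l (M i j) (t, c t)
                * deriv (fun r => c r l) t * deriv (fun r => c r j) t
            + ∑ j, M i j (t, c t) * deriv (deriv fun s => c s j) t := by
        rw [Finset.sum_add_distrib]
        congr 1
        have hterm : ∀ j : Fin m, (pdt (M i j) (t, c t)
              + ∑ l, pdq l (M i j) (t, c t) * deriv (fun r => c r l) t)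
                * deriv (fun r => c r j) t
            = pdt (M i j) (t, c t) * deriv (fun r => c r j) t
              + ∑ l, pdq l (M i j) (t, c t) * deriv (fun r => c r l) t
                * deriv (fun r => c r j) t := by
          intro j; rw [add_mul, Finset.sum_mul]
        rw [Finset.sum_congr rfl fun j _ => hterm j, Finset.sum_add_distrib, Finset.sum_comm]
      linarith [eone]
    constructor
    · intro h t i
      have h0 := h t i
      rw [key t i] at h0
      linarith
    · intro h t i
      have h0 := h t i
      rw [key t i]
      linarith
end

section
/- For the external force b^i_k(x) x^k_0 + b^i_0(x) added to a geodesic-type dynamic equation with mass tensor m_{ik} = -g_{ik} and g_{0i} = 0, the relativization constraint g_{μν} σ^μ_λ ẋ^λ ẋ^ν = 0 with σ^0_0 = 0, σ^0_k = -g^{00} g_{kj} b^j_0, σ^j_k = b^j_k, σ^j_0 = b^j_0 holds for all ẋ if and only if g_{ik} b^i_j + g_{ij} b^i_k = 0 for all j, k (the velocity-dependent force is of Lorentz type). -/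
/-!
With `A l ν = ∑ μ, g μ ν * σ μ l` (that is, `g_{μν} σ^μ_λ`), the quadratic form `∑ A l ν ẋ^l ẋ^ν`
vanishes identically iff `A` is antisymmetric: evaluate at `e_i`, `e_j` and `e_i + e_j` for one
direction, and for the other note that the form equals its own negative. Since `g_{0i} = 0` and
`σ^0_0 = 0`, the entry `A_{00}` vanishes, and the choice `σ^0_k = -g^{00} g_{kj} b^j_0` is exactly
what makes `A_{0k} + A_{k0} = 0`; so antisymmetry of `A` reduces to that of its spatial block
`A_{jk} = g_{kl} b^l_j`.
-/

open Finset

section QuadraticForm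

variable {ι R : Type*} [Fintype ι] [CommRing R]

lemma sum_sum_mul_add_mul_add (A : ι → ι → R) (u w : ι → R) :
    ∑ l, ∑ ν, A l ν * (u + w) l * (u + w) ν =
      ∑ l, ∑ ν, A l ν * u l * u ν + ∑ l, ∑ ν, A l ν * u l * w ν
        + ∑ l, ∑ ν, A l ν * w l * u ν + ∑ l, ∑ ν, A l ν * w l * w ν := by
  simp only [Pi.add_apply, mul_add, add_mul, sum_add_distrib]
  ring

lemma sum_sum_mul_single_mul_single [DecidableEq ι] (A : ι → ι → R) (i j : ι) :
    ∑ l, ∑ ν, A l ν * (Pi.single i 1 : ι → R) l * (Pi.single j 1 : ι → R) ν = A i j := by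
  simp [Pi.single_apply]

lemma forall_sum_sum_mul_mul_eq_zero_iff [IsAddTorsionFree R] (A : ι → ι → R) :
    (∀ v : ι → R, ∑ l, ∑ ν, A l ν * v l * v ν = 0) ↔ ∀ i j, A i j + A j i = 0 := by
  classical
  constructor
  · intro h i j
    have hii := h (Pi.single i 1)
    have hjj := h (Pi.single j 1)
    have hij := h (Pi.single i 1 + Pi.single j 1)
    simp only [sum_sum_mul_add_mul_add, sum_sum_mul_single_mul_single] at hii hjj hij
    linear_combination hij - hii - hjj
  · intro h v
    set S := ∑ l, ∑ ν, A l ν * v l * v ν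
    have hS : S + S = 0 := calc
      S + S = ∑ l, ∑ ν, A l ν * v l * v ν + ∑ l, ∑ ν, A ν l * v l * v ν := by
        rw [sum_comm (f := fun l ν => A ν l * v l * v ν)]
        simp only [S, mul_right_comm]
      _ = ∑ l, ∑ ν, (A l ν + A ν l) * v l * v ν := by
        simp only [← sum_add_distrib, add_mul]
      _ = 0 := by simp [h]
    rwa [← two_nsmul, nsmul_eq_zero_iff, or_iff_left two_ne_zero] at hS

end QuadraticForm

section Relativization

variable {ι K : Type*} [Fintype ι] [Field K] {g σ : Option ι → Option ι → K}

lemma sum_metric_mul_sigma_none_none (hgi0 : ∀ i, g (some i) none = 0)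
    (hσ00 : σ none none = 0) :
    ∑ μ, g μ none * σ μ none = 0 := by
  simp [Fintype.sum_option, hσ00, hgi0]

lemma sum_metric_mul_sigma_some_some (hgsym : ∀ μ ν, g μ ν = g ν μ)
    (hg0i : ∀ i, g none (some i) = 0) (b : ι → ι → K)
    (hσjk : ∀ j k, σ (some j) (some k) = b j k) (i j : ι) :
    ∑ μ, g μ (some i) * σ μ (some j) = ∑ k, g (some i) (some k) * b k j := by
  simp only [Fintype.sum_option, hg0i, hσjk, zero_mul, zero_add]
  exact sum_congr rfl fun k _ ↦ by rw [hgsym]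

lemma sum_metric_mul_sigma_none_some_add (hgsym : ∀ μ ν, g μ ν = g ν μ)
    (hgi0 : ∀ i, g (some i) none = 0) (hg00 : g none none ≠ 0) (b0 : ι → K)
    (hσ00 : σ none none = 0)
    (hσ0k : ∀ k, σ none (some k) = -(g none none)⁻¹ * ∑ j, g (some k) (some j) * b0 j)
    (hσj0 : ∀ j, σ (some j) none = b0 j) (n : ι) :
    ∑ μ, g μ (some n) * σ μ none + ∑ μ, g μ none * σ μ (some n) = 0 := by
  simp only [Fintype.sum_option, hσ00, hσ0k, hσj0, hgi0, mul_zero, zero_mul, add_zero,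
    zero_add, sum_const_zero]
  rw [neg_mul, mul_neg, mul_inv_cancel_left₀ hg00, add_neg_eq_zero]
  exact sum_congr rfl fun j _ ↦ by rw [hgsym]

end Relativization

theorem stmt18 (m : ℕ)
    (g : Option (Fin m) → Option (Fin m) → ℝ)
    (hgsym : ∀ μ ν, g μ ν = g ν μ)
    (hg0i : ∀ i, g none (some i) = 0)
    (hg00 : g none none ≠ 0)
    (b : Fin m → Fin m → ℝ) (b0 : Fin m → ℝ)
    (σ : Option (Fin m) → Option (Fin m) → ℝ)
    (hσ00 : σ none none = 0)
    (hσ0k : ∀ k, σ none (some k) =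
      -(g none none)⁻¹ * ∑ j, g (some k) (some j) * b0 j)
    (hσj0 : ∀ j, σ (some j) none = b0 j)
    (hσjk : ∀ j k, σ (some j) (some k) = b j k) :
    (∀ v : Option (Fin m) → ℝ,
      ∑ l, ∑ ν, (∑ μ, g μ ν * σ μ l) * v l * v ν = 0) ↔
    (∀ i j, ∑ kk, g (some i) (some kk) * b kk j
      + ∑ kk, g (some j) (some kk) * b kk i = 0) := by
  have hgi0 : ∀ i, g (some i) none = 0 := fun i ↦ (hgsym _ _).trans (hg0i i)
  have hmixed := sum_metric_mul_sigma_none_some_add hgsym hgi0 hg00 b0 hσ00 hσ0k hσj0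
  have hmixed' : ∀ n, ∑ μ, g μ none * σ μ (some n) + ∑ μ, g μ (some n) * σ μ none = 0 :=
    fun n ↦ (add_comm _ _).trans (hmixed n)
  rw [forall_sum_sum_mul_mul_eq_zero_iff]
  simp only [Option.forall, sum_metric_mul_sigma_none_none hgi0 hσ00,
    sum_metric_mul_sigma_some_some hgsym hg0i b hσjk, hmixed, hmixed',
    add_zero, implies_true, true_and]
  exact forall_comm
end
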